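/- Let (A, Ã) be a dual pair of closed densely defined operators on a complex Hilbert space H with the common core property (common core D), with A dissipative, and let V := ((A − Ã)/(2i))↾_D be its imaginary part (a non-negative symmetric operator). Let W_F = V_F^{1/2} and W_K = V_K^{1/2} be the square roots of the Friedrichs and Kreĭn–von Neumann extensions of V, and let U be the bounded operator with U(W_F h) = W_K h for all h ∈ D(W_F), isometric on the closure of ran(W_F) and vanishing on its orthogonal complement. Let 𝒱 ⊆ D(Ã*) be a subspace with 𝒱 ∩ D(A) = {0} and let L : 𝒱 → H be linear. Assume that for every v ∈ 𝒱 one has v ∈ D(W_K) and Lv = W_F φ_v for some (necessarily unique) φ_v ∈ D(W_F) ∩ closure(ran(W_F)). Then the extension A_{𝒱,L} (with domain D(A) ∔ 𝒱, acting as f + v ↦ Ã*(f+v) + Lv) is dissipative, i.e., Im⟨f+v, Ã*(f+v) + Lv⟩ ≥ 0 for all f ∈ D(A) and v ∈ 𝒱, if and only if for every v ∈ 𝒱: Im⟨v, Ã*v + Lv⟩ ≥ (1/4)‖U φ_v + 2i W_K v‖². -/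

import Mathlib

noncomputable section

open Complex

variable {H : Type*} [NormedAddCommGroup H] [InnerProductSpace ℂ H] [CompleteSpace H]

local notation "⟪" x ", " y "⟫" => @inner ℂ _ _ x y

/-- A partially defined operator is *dissipative* if `Im ⟪ψ, A ψ⟫ ≥ 0` for all `ψ` in its
domain. -/
def Dissipative (A : H →ₗ.[ℂ] H) : Prop :=
  ∀ ψ : A.domain, 0 ≤ (⟪(ψ : H), A ψ⟫).im

/-- A partially defined operator is *symmetric* if `⟪f, S g⟫ = ⟪S f, g⟫` on its domain. -/
def IsSymmetricP (S : H →ₗ.[ℂ] H) : Prop :=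
  ∀ f g : S.domain, ⟪(f : H), S g⟫ = ⟪S f, (g : H)⟫

/-- A partially defined operator is *non-negative* if `⟪f, V f⟫` is real and `≥ 0` on its
domain. -/
def NonnegP (V : H →ₗ.[ℂ] H) : Prop :=
  ∀ f : V.domain, (⟪(f : H), V f⟫).im = 0 ∧ 0 ≤ (⟪(f : H), V f⟫).re

/-- `T = W ∘ W` as partially defined operators: the domain of `T` is
`{x ∈ D(W) : W x ∈ D(W)}` and there `T x = W (W x)`. -/
def IsSqrtOf (W T : H →ₗ.[ℂ] H) : Prop :=
  (∀ x : H, x ∈ T.domain ↔ ∃ hx : x ∈ W.domain, W ⟨x, hx⟩ ∈ W.domain) ∧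
  ∀ (x : H) (hxT : x ∈ T.domain) (hxW : x ∈ W.domain) (hWx : W ⟨x, hxW⟩ ∈ W.domain),
    T ⟨x, hxT⟩ = W ⟨W ⟨x, hxW⟩, hWx⟩

/-- The Ando–Nishio supremum `sup { |⟪h, V f⟫|² / ⟪f, V f⟫ : f ∈ D(V), V f ≠ 0 }`,
computed in `[0, ∞]`. -/
def anSup (V : H →ₗ.[ℂ] H) (h : H) : ENNReal :=
  ⨆ f : {f : V.domain // V f ≠ 0},
    ENNReal.ofReal (‖⟪h, V f.1⟫‖ ^ 2) / ENNReal.ofReal ((⟪(f.1 : H), V f.1⟫).re)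

/-- `W` is the square root of the Friedrichs extension of `V`: `W` is a non-negative
selfadjoint operator, `W ∘ W` is a non-negative selfadjoint extension of `V`, and `D(V)` is a
core for `W`. -/
def IsFriedrichsSqrt (V W : H →ₗ.[ℂ] H) : Prop :=
  IsSelfAdjoint W ∧ NonnegP W ∧
    (∃ T : H →ₗ.[ℂ] H, IsSqrtOf W T ∧ IsSelfAdjoint T ∧ NonnegP T ∧ V ≤ T) ∧
    (W.domRestrict V.domain).closure = W

/-- `W` is the square root of the Kreĭn–von Neumann extension of `V` (Ando–Nishio
characterization): `W` is a non-negative selfadjoint operator, `W ∘ W` is a non-negative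
selfadjoint extension of `V`, the domain of `W` consists exactly of those `h` with
`anSup V h < ∞`, and `‖W h‖² = anSup V h` there. -/
def IsKreinSqrt (V W : H →ₗ.[ℂ] H) : Prop :=
  IsSelfAdjoint W ∧ NonnegP W ∧
    (∃ T : H →ₗ.[ℂ] H, IsSqrtOf W T ∧ IsSelfAdjoint T ∧ NonnegP T ∧ V ≤ T) ∧
    (∀ h : H, h ∈ W.domain ↔ anSup V h < ⊤) ∧
    ∀ (h : H) (hh : h ∈ W.domain), ENNReal.ofReal (‖W ⟨h, hh⟩‖ ^ 2) = anSup V h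

/-!
For `f` in the common core `D(V)` and `v ∈ 𝓥`, expanding with `A ⊆ Ã*`, `V = (A - Ã)/(2i)`,
`⟪f, V f⟫ = ‖W_F f‖²`, `⟪v, V f⟫ = ⟪W_K v, W_K f⟫ = ⟪U* W_K v, W_F f⟫` and `L v = W_F φ_v` gives
`Im ⟪f + v, A f + Ã* v + L v⟫ = ‖W_F f‖² + Re ⟪c_v, W_F f⟫ + Im ⟪v, Ã* v + L v⟫` with
`c_v = 2 U* W_K v - i φ_v`. Since `D` is a core for `A` and `D(V)` one for `W_F`, dissipativity of
`A_{𝓥,L}` says that the quadratic `g ↦ ‖g‖² + Re ⟪c_v, g⟫ + Im ⟪v, Ã* v + L v⟫` is non-negative on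
`cl ran W_F`, which contains `c_v`; its minimum there, at `g = -c_v / 2`, is
`Im ⟪v, Ã* v + L v⟫ - ‖c_v‖² / 4`. Finally `‖c_v‖ = ‖U φ_v + 2i W_K v‖`, because `U` is isometric
on `cl ran W_F` and `U U*` fixes `W_K v`, which by the Ando–Nishio characterisation lies in the
closure of `W_K (D(V))`.
-/

open scoped InnerProduct
open ComplexConjugate

namespace LinearPMap

variable {R E F : Type*} [CommRing R] [AddCommGroup E] [AddCommGroup F] [Module R E] [Module R F]

theorem apply_add_of_le {A T : E →ₗ.[R] F} (hAT : A ≤ T) (f : A.domain) {w : E}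
    (hw : w ∈ T.domain) (hfw : (f : E) + w ∈ T.domain) :
    T ⟨(f : E) + w, hfw⟩ = A f + T ⟨w, hw⟩ := by
  have hsplit : (⟨(f : E) + w, hfw⟩ : T.domain) = ⟨f, hAT.1 f.2⟩ + ⟨w, hw⟩ := rfl
  rw [hsplit, T.map_add, hAT.2 (x := f) (y := ⟨f, hAT.1 f.2⟩) rfl]

variable [TopologicalSpace E] [TopologicalSpace F] [TopologicalSpace R] [ContinuousAdd E]
  [ContinuousAdd F] [ContinuousSMul R E] [ContinuousSMul R F]

theorem mem_of_closure_domRestrict_eq {T : E →ₗ.[R] F} {S : Submodule R E}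
    (hT : (T.domRestrict S).closure = T) {C : Set (E × F)} (hC : _root_.IsClosed C)
    (hS : ∀ x : (T.domRestrict S).domain, ((x : E), T.domRestrict S x) ∈ C) (x : T.domain) :
    ((x : E), T x) ∈ C := by
  have hgraph : ((T.domRestrict S).graph : Set (E × F)) ⊆ C := fun _ hp => by
    obtain ⟨y, rfl⟩ := (mem_graph_iff' _).1 hp
    exact hS y
  by_cases hc : (T.domRestrict S).IsClosable
  · have hT' := hc.graph_closure_eq_closure_graph
    rw [hT] at hT'
    refine closure_minimal hgraph hC ?_
    rw [← Submodule.topologicalClosure_coe, hT']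
    exact T.mem_graph x
  · rw [closure_def' hc] at hT
    exact hgraph (by rw [hT]; exact T.mem_graph x)

theorem apply_mem_closure_range_domRestrict {T : E →ₗ.[R] F} {S : Submodule R E}
    (hT : (T.domRestrict S).closure = T) (x : T.domain) :
    T x ∈ _root_.closure (Set.range (T.domRestrict S)) :=
  mem_of_closure_domRestrict_eq hT (C := Prod.snd ⁻¹' _root_.closure (Set.range (T.domRestrict S)))
    (isClosed_closure.preimage continuous_snd) (fun y => subset_closure ⟨y, rfl⟩) x

end LinearPMap

section PartialIsometry

variable {𝕜 E : Type*} [RCLike 𝕜] [NormedAddCommGroup E] [InnerProductSpace 𝕜 E] [CompleteSpace E]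

structure IsPartialIsometryOn (U : E →L[𝕜] E) (M : Submodule 𝕜 E) : Prop where
  isClosed : IsClosed (M : Set E)
  norm_map : ∀ x ∈ M, ‖U x‖ = ‖x‖
  map_orthogonal : ∀ x ∈ Mᗮ, U x = 0

namespace IsPartialIsometryOn

variable {U : E →L[𝕜] E} {M : Submodule 𝕜 E}

theorem adjoint_apply_mem (hU : IsPartialIsometryOn U M) (y : E) : (U†) y ∈ M := by
  have hy : (U†) y ∈ Mᗮᗮ := fun z hz => by
    rw [ContinuousLinearMap.adjoint_inner_right, hU.map_orthogonal z hz, inner_zero_left]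
  rwa [Submodule.orthogonal_orthogonal_eq_closure, hU.isClosed.submodule_topologicalClosure_eq]
    at hy

theorem adjoint_apply_apply (hU : IsPartialIsometryOn U M) {x : E} (hx : x ∈ M) :
    (U†) (U x) = x := by
  let Ui : M →ₗᵢ[𝕜] E := ⟨U.toLinearMap ∘ₗ M.subtype, fun y => hU.norm_map y y.2⟩
  have horth : (U†) (U x) - x ∈ Mᗮ := fun y hy => by
    rw [inner_sub_right, ContinuousLinearMap.adjoint_inner_right, sub_eq_zero]
    exact Ui.inner_map_map ⟨y, hy⟩ ⟨x, hx⟩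
  have hmem : (U†) (U x) - x ∈ M ⊓ Mᗮ := ⟨M.sub_mem (hU.adjoint_apply_mem _) hx, horth⟩
  rw [Submodule.inf_orthogonal_eq_bot, Submodule.mem_bot, sub_eq_zero] at hmem
  exact hmem

theorem apply_adjoint_apply (hU : IsPartialIsometryOn U M) {k : E} (hk : k ∈ closure (U '' M)) :
    U ((U†) k) = k := by
  refine closure_minimal ?_ (isClosed_eq (U.continuous.comp (U†).continuous) continuous_id) hk
  rintro _ ⟨x, hx, rfl⟩
  exact congrArg U (hU.adjoint_apply_apply hx)

end IsPartialIsometryOn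

theorem IsSelfAdjoint.isFormalAdjoint {W : E →ₗ.[𝕜] E} (hW : IsSelfAdjoint W) :
    W.IsFormalAdjoint W := by
  have h := LinearPMap.adjoint_isFormalAdjoint hW.dense_domain
  rwa [LinearPMap.isSelfAdjoint_def.1 hW] at h

end PartialIsometry

theorem IsPartialIsometryOn.norm_two_smul_adjoint_sub {U : H →L[ℂ] H} {M : Submodule ℂ H}
    (hU : IsPartialIsometryOn U M) {k φ : H} (hk : U ((U†) k) = k) (hφ : φ ∈ M) :
    ‖(2 : ℂ) • (U†) k - I • φ‖ = ‖U φ + (2 * I) • k‖ := by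
  have hc : (2 : ℂ) • (U†) k - I • φ ∈ M :=
    M.sub_mem (M.smul_mem _ (hU.adjoint_apply_mem k)) (M.smul_mem _ hφ)
  have hIU : I • U ((2 : ℂ) • (U†) k - I • φ) = U φ + (2 * I) • k := by
    rw [map_sub, map_smul, map_smul, hk, smul_sub, smul_smul, smul_smul, I_mul_I, mul_comm]
    module
  rw [← hU.norm_map _ hc, ← hIU, norm_smul, norm_I, one_mul]

section ComplexInner

variable {E : Type*} [NormedAddCommGroup E] [InnerProductSpace ℂ E]

theorem forall_norm_sq_add_re_inner_nonneg_iff {M : Submodule ℂ E} {c : E} (hc : c ∈ M) (q : ℝ) :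
    (∀ g ∈ M, 0 ≤ ‖g‖ ^ 2 + (⟪c, g⟫).re + q) ↔ 1 / 4 * ‖c‖ ^ 2 ≤ q := by
  constructor
  · intro h
    have hhalf := h (((-1 / 2 : ℝ) : ℂ) • c) (M.smul_mem _ hc)
    rw [norm_smul, inner_smul_right, inner_self_eq_norm_sq_to_K, norm_real] at hhalf
    norm_num [← ofReal_pow] at hhalf
    nlinarith
  · intro h g _
    have hcg : -(‖c‖ * ‖g‖) ≤ (⟪c, g⟫).re :=
      neg_le_of_abs_le ((abs_re_le_norm _).trans (norm_inner_le_norm c g))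
    nlinarith [sq_nonneg (‖g‖ - ‖c‖ / 2)]

-- In the application `x = f`, `w = v`, `a = A f`, `b = Ã f`, `X = Ã* v`, `l = L v`, `g = W_F f`,
-- `u = U* W_K v`, `p = φ_v` and `m = V f`.
theorem im_inner_add_add_eq {x w a b X l g u p m : E}
    (hab : a - b = (2 * I) • m) (hxm : ⟪x, m⟫ = ((‖g‖ ^ 2 : ℝ) : ℂ))
    (hax : ⟪a, x⟫ = ⟪x, b⟫) (hXx : ⟪X, x⟫ = ⟪w, b⟫) (hwm : ⟪w, m⟫ = ⟪u, g⟫)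
    (hxl : ⟪x, l⟫ = ⟪g, p⟫) :
    (⟪x + w, a + (X + l)⟫).im = ‖g‖ ^ 2 + (⟪(2 : ℂ) • u - I • p, g⟫).re + (⟪w, X + l⟫).im := by
  have hxa : ⟪x, a⟫ - conj ⟪x, a⟫ = (2 * I) * ((‖g‖ ^ 2 : ℝ) : ℂ) := by
    rw [inner_conj_symm, hax, ← inner_sub_right, hab, inner_smul_right, hxm]
  have hwa : ⟪w, a⟫ - ⟪w, b⟫ = (2 * I) * ⟪u, g⟫ := by
    rw [← inner_sub_right, hab, inner_smul_right, hwm]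
  have hxX : ⟪x, X⟫ = conj ⟪w, b⟫ := by rw [← hXx, inner_conj_symm]
  have hxl' : ⟪x, l⟫ = conj ⟪p, g⟫ := by rw [hxl, inner_conj_symm]
  have him_xa := congrArg im hxa
  have him_wa := congrArg im hwa
  simp only [inner_add_left, inner_add_right, inner_sub_left, inner_smul_left, hxX, hxl',
    map_ofNat, conj_I]
  simp only [sub_im, add_im, sub_re, mul_im, mul_re, conj_im, I_re, I_im,
    ofReal_re, ofReal_im, neg_re, neg_im, re_ofNat, im_ofNat] at him_xa him_wa ⊢
  linarith

theorem forall_im_inner_nonneg_iff_of_core {A G : E →ₗ.[ℂ] E} {S : Submodule ℂ E}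
    (hA : (A.domRestrict S).closure = A) (hG : (G.domRestrict S).closure = G)
    (hSA : S ≤ A.domain) (hSG : S ≤ G.domain) {w y c : E}
    (hc : c ∈ (LinearMap.range G.toFun).topologicalClosure)
    (hid : ∀ f : S, (⟪(f : E) + w, A ⟨f, hSA f.2⟩ + y⟫).im =
      ‖G ⟨f, hSG f.2⟩‖ ^ 2 + (⟪c, G ⟨f, hSG f.2⟩⟫).re + (⟪w, y⟫).im) :
    (∀ f : A.domain, 0 ≤ (⟪(f : E) + w, A f + y⟫).im) ↔ 1 / 4 * ‖c‖ ^ 2 ≤ (⟪w, y⟫).im := by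
  set M := (LinearMap.range (G.domRestrict S).toFun).topologicalClosure
  have hGM : ∀ x : G.domain, G x ∈ M := fun x => by
    rw [← SetLike.mem_coe, Submodule.topologicalClosure_coe, LinearMap.coe_range]
    exact G.apply_mem_closure_range_domRestrict hG x
  have hcM : c ∈ M := by
    refine Submodule.topologicalClosure_minimal _ ?_ (Submodule.isClosed_topologicalClosure _) hc
    rintro _ ⟨x, rfl⟩
    exact hGM x
  rw [← forall_norm_sq_add_re_inner_nonneg_iff hcM]
  constructor
  · intro h g hg
    rw [← SetLike.mem_coe, Submodule.topologicalClosure_coe, LinearMap.coe_range] at hg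
    refine closure_minimal ?_ (isClosed_le continuous_const (by fun_prop) :
      IsClosed {g : E | 0 ≤ ‖g‖ ^ 2 + (⟪c, g⟫).re + (⟪w, y⟫).im}) hg
    rintro _ ⟨x, rfl⟩
    change 0 ≤ ‖G.domRestrict S x‖ ^ 2 + (⟪c, G.domRestrict S x⟫).re + (⟪w, y⟫).im
    rw [LinearPMap.domRestrict_apply (x := x) (y := ⟨x, hSG x.2.1⟩) rfl,
      ← hid ⟨x, x.2.1⟩]
    exact h ⟨x, hSA x.2.1⟩
  · intro h f
    refine A.mem_of_closure_domRestrict_eq hA (C := {p | 0 ≤ (⟪p.1 + w, p.2 + y⟫).im})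
      (isClosed_le continuous_const (by fun_prop)) (fun x => ?_) f
    change 0 ≤ (⟪(x : E) + w, A.domRestrict S x + y⟫).im
    rw [LinearPMap.domRestrict_apply (x := x) (y := ⟨x, hSA x.2.1⟩) rfl,
      hid ⟨x, x.2.1⟩]
    exact h _ (hGM _)

theorem IsSqrtOf.domain_le {W T : E →ₗ.[ℂ] E} (hWT : IsSqrtOf W T) : T.domain ≤ W.domain :=
  fun x hx => ((hWT.1 x).1 hx).fst

theorem anSup_le_ofReal {V : E →ₗ.[ℂ] E} {h : E} {C : ℝ} (hC : 0 ≤ C)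
    (hbound : ∀ f : V.domain, ‖⟪h, V f⟫‖ ^ 2 ≤ C * (⟪(f : E), V f⟫).re) :
    anSup V h ≤ ENNReal.ofReal C :=
  iSup_le fun f => ENNReal.div_le_of_le_mul <| by
    rw [← ENNReal.ofReal_mul hC]
    exact ENNReal.ofReal_le_ofReal (hbound f.1)

end ComplexInner

namespace IsSqrtOf

variable {V W T : H →ₗ.[ℂ] H}

theorem inner_apply_of_le (hWT : IsSqrtOf W T) (hW : IsSelfAdjoint W) (hVT : V ≤ T)
    (x : V.domain) (y : W.domain) :
    ⟪(y : H), V x⟫ = ⟪W y, W ⟨x, hWT.domain_le (hVT.1 x.2)⟩⟫ := by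
  obtain ⟨hxW, hWx⟩ := (hWT.1 x).1 (hVT.1 x.2)
  rw [hVT.2 (y := ⟨x, hVT.1 x.2⟩) rfl, hWT.2 x _ hxW hWx]
  exact (hW.isFormalAdjoint y ⟨_, hWx⟩).symm

theorem re_inner_apply_self_of_le (hWT : IsSqrtOf W T) (hW : IsSelfAdjoint W) (hVT : V ≤ T)
    (x : V.domain) : (⟪(x : H), V x⟫).re = ‖W ⟨x, hWT.domain_le (hVT.1 x.2)⟩‖ ^ 2 := by
  rw [hWT.inner_apply_of_le hW hVT x ⟨x, _⟩, inner_self_eq_norm_sq_to_K]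
  norm_cast

end IsSqrtOf

theorem IsKreinSqrt.apply_mem_closure_range {V W : H →ₗ.[ℂ] H} (hW : IsKreinSqrt V W)
    (hVW : V.domain ≤ W.domain) (h : W.domain) :
    W h ∈ closure (Set.range fun f : V.domain => W ⟨f, hVW f.2⟩) := by
  obtain ⟨hWsa, -, ⟨T, hWT, -, -, hVT⟩, -, hnorm⟩ := hW
  set N := (LinearMap.range (W.toFun ∘ₗ Submodule.inclusion hVW)).topologicalClosure
  have hN : (N : Set H) = closure (Set.range fun f : V.domain => W ⟨f, hVW f.2⟩) := by
    rw [Submodule.topologicalClosure_coe, LinearMap.coe_range]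
    rfl
  set P := N.starProjection (W h)
  -- The Ando–Nishio supremum only sees `P`, so `‖W h‖ ≤ ‖P‖`, which forces `W h = P`.
  have hinner : ∀ f : V.domain, ⟪(h : H), V f⟫ = ⟪P, W ⟨f, hVW f.2⟩⟫ := fun f => by
    have hf : W ⟨f, hVW f.2⟩ ∈ N := Submodule.le_topologicalClosure _ ⟨f, rfl⟩
    rw [hWT.inner_apply_of_le hWsa hVT f h, N.inner_starProjection_left_eq_right,
      N.starProjection_eq_self_iff.2 hf]
  have hsup : anSup V h ≤ ENNReal.ofReal (‖P‖ ^ 2) := by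
    refine anSup_le_ofReal (by positivity) fun f => ?_
    rw [hinner f, hWT.re_inner_apply_self_of_le hWsa hVT f, ← mul_pow]
    exact pow_le_pow_left₀ (norm_nonneg _) (norm_inner_le_norm _ _) 2
  have hle : ‖W h‖ ^ 2 ≤ ‖P‖ ^ 2 :=
    (ENNReal.ofReal_le_ofReal_iff (by positivity)).1 (hnorm h h.2 ▸ hsup)
  rw [← hN, SetLike.mem_coe, N.mem_iff_norm_starProjection]
  exact le_antisymm (N.norm_starProjection_apply_le _)
    (pow_le_pow_iff_left₀ (norm_nonneg _) (norm_nonneg _) two_ne_zero |>.1 hle)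

theorem IsPartialIsometryOn.apply_adjoint_apply_of_isKreinSqrt {V WF WK : H →ₗ.[ℂ] H}
    {U : H →L[ℂ] H} (hU : IsPartialIsometryOn U (LinearMap.range WF.toFun).topologicalClosure)
    (hWK : IsKreinSqrt V WK) (hVWF : V.domain ≤ WF.domain) (hVWK : V.domain ≤ WK.domain)
    (hUV : ∀ x : V.domain, U (WF ⟨x, hVWF x.2⟩) = WK ⟨x, hVWK x.2⟩) (h : WK.domain) :
    U ((U†) (WK h)) = WK h := by
  refine hU.apply_adjoint_apply (closure_mono ?_ (hWK.apply_mem_closure_range hVWK h))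
  rintro _ ⟨x, rfl⟩
  exact ⟨_, Submodule.le_topologicalClosure _ ⟨⟨x, hVWF x.2⟩, rfl⟩, hUV x⟩

theorem im_inner_add_add_eq_of_isSqrtOf {A At V WF WK TF TK : H →ₗ.[ℂ] H} {U : H →L[ℂ] H}
    (hAt : Dense (At.domain : Set H)) (hdual : A ≤ At.adjoint)
    (hWF : IsSelfAdjoint WF) (hTF : IsSqrtOf WF TF) (hVTF : V ≤ TF)
    (hWK : IsSelfAdjoint WK) (hTK : IsSqrtOf WK TK) (hVTK : V ≤ TK)
    (x : V.domain) (hxA : (x : H) ∈ A.domain) (hxAt : (x : H) ∈ At.domain)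
    (hVx : V x = (2 * I)⁻¹ • (A ⟨x, hxA⟩ - At ⟨x, hxAt⟩))
    (hUx : U (WF ⟨x, hTF.domain_le (hVTF.1 x.2)⟩) = WK ⟨x, hTK.domain_le (hVTK.1 x.2)⟩)
    {w : H} (hw : w ∈ At.adjoint.domain) (hwK : w ∈ WK.domain) (p : WF.domain) :
    (⟪(x : H) + w, A ⟨x, hxA⟩ + (At.adjoint ⟨w, hw⟩ + WF p)⟫).im =
      ‖WF ⟨x, hTF.domain_le (hVTF.1 x.2)⟩‖ ^ 2
        + (⟪(2 : ℂ) • (U†) (WK ⟨w, hwK⟩) - I • (p : H), WF ⟨x, hTF.domain_le (hVTF.1 x.2)⟩⟫).re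
        + (⟪w, At.adjoint ⟨w, hw⟩ + WF p⟫).im := by
  have hAt' := LinearPMap.adjoint_isFormalAdjoint hAt
  refine im_inner_add_add_eq (b := At ⟨x, hxAt⟩) (m := V x) ?_ ?_ ?_ ?_ ?_ ?_
  · rw [hVx, smul_smul, mul_inv_cancel₀ (by simp), one_smul]
  · rw [hTF.inner_apply_of_le hWF hVTF x ⟨x, _⟩, inner_self_eq_norm_sq_to_K]
    norm_cast
  · rw [hdual.2 (y := ⟨x, hdual.1 hxA⟩) rfl]
    exact hAt' _ ⟨x, hxAt⟩
  · exact hAt' ⟨w, hw⟩ ⟨x, hxAt⟩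
  · rw [hTK.inner_apply_of_le hWK hVTK x ⟨w, hwK⟩, ← hUx, ContinuousLinearMap.adjoint_inner_left]
  · exact (hWF.isFormalAdjoint ⟨x, hTF.domain_le (hVTF.1 x.2)⟩ p).symm

theorem statement7_general
    (A At V : H →ₗ.[ℂ] H) (D : Submodule ℂ H)
    (hAtdense : Dense (At.domain : Set H))
    (hdual : A ≤ At.adjoint)
    (hDA : D ≤ A.domain) (hDAt : D ≤ At.domain)
    (hcoreA : (A.domRestrict D).closure = A)
    (hVdom : V.domain = D)
    (hV : ∀ (x : H) (hxV : x ∈ V.domain) (hxA : x ∈ A.domain) (hxAt : x ∈ At.domain),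
      V ⟨x, hxV⟩ = (2 * Complex.I)⁻¹ • (A ⟨x, hxA⟩ - At ⟨x, hxAt⟩))
    (𝓥 : Submodule ℂ H) (h𝓥 : 𝓥 ≤ At.adjoint.domain)
    (L : 𝓥 →ₗ[ℂ] H)
    (WF WK : H →ₗ.[ℂ] H)
    (hWF : IsFriedrichsSqrt V WF) (hWK : IsKreinSqrt V WK)
    (U : H →L[ℂ] H)
    (hU1 : ∀ (h : H) (hF : h ∈ WF.domain) (hK : h ∈ WK.domain),
      U (WF ⟨h, hF⟩) = WK ⟨h, hK⟩)
    (hU2 : ∀ x ∈ closure (Set.range fun g : WF.domain => WF g), ‖U x‖ = ‖x‖)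
    (hU3 : ∀ x : H, (∀ g : WF.domain, ⟪WF g, x⟫ = 0) → U x = 0)
    (hvK : ∀ v : 𝓥, (v : H) ∈ WK.domain)
    (φ : 𝓥 → H)
    (hφdom : ∀ v : 𝓥, φ v ∈ WF.domain)
    (hφran : ∀ v : 𝓥, φ v ∈ closure (Set.range fun g : WF.domain => WF g))
    (hφ : ∀ v : 𝓥, WF ⟨φ v, hφdom v⟩ = L v) :
    (∀ (f : A.domain) (v : 𝓥) (hfv : (f : H) + (v : H) ∈ At.adjoint.domain),
      0 ≤ (⟪(f : H) + (v : H), At.adjoint ⟨(f : H) + (v : H), hfv⟩ + L v⟫).im) ↔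
      ∀ (v : 𝓥) (hv : (v : H) ∈ At.adjoint.domain),
        (1 / 4) * ‖U (φ v) + (2 * Complex.I) • WK ⟨(v : H), hvK v⟩‖ ^ 2
          ≤ (⟪(v : H), At.adjoint ⟨(v : H), hv⟩ + L v⟫).im := by
  obtain ⟨hWFsa, -, ⟨TF, hTF, -, -, hVTF⟩, hWFcore⟩ := hWF
  obtain ⟨TK, hTK, -, -, hVTK⟩ := hWK.2.2.1
  have hVWF : V.domain ≤ WF.domain := fun _ hx => hTF.domain_le (hVTF.1 hx)
  have hVWK : V.domain ≤ WK.domain := fun _ hx => hTK.domain_le (hVTK.1 hx)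
  set M := (LinearMap.range WF.toFun).topologicalClosure
  have hM : (M : Set H) = closure (Set.range fun g : WF.domain => WF g) := by
    rw [Submodule.topologicalClosure_coe, LinearMap.coe_range]
    rfl
  have hU : IsPartialIsometryOn U M :=
    ⟨hM ▸ isClosed_closure, fun x hx => hU2 x (hM ▸ hx), fun x hx => hU3 x fun g =>
      (M.mem_orthogonal x).1 hx _ (Submodule.le_topologicalClosure _ ⟨g, rfl⟩)⟩
  have hφM : ∀ v : 𝓥, φ v ∈ M := fun v => by
    rw [← SetLike.mem_coe, hM]
    exact hφran v
  rw [forall_comm]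
  refine forall_congr' fun v => ?_
  have hext : ∀ f : A.domain, (∀ hfv, 0 ≤ (⟪(f : H) + v, At.adjoint ⟨(f : H) + v, hfv⟩ + L v⟫).im)
      ↔ 0 ≤ (⟪(f : H) + v, A f + (At.adjoint ⟨v, h𝓥 v.2⟩ + L v)⟫).im := fun f => by
    rw [forall_prop_of_true (add_mem (hdual.1 f.2) (h𝓥 v.2)),
      LinearPMap.apply_add_of_le hdual f (h𝓥 v.2), add_assoc]
  rw [forall_congr' hext, forall_prop_of_true (h𝓥 v.2), ← hφ v,
    ← hU.norm_two_smul_adjoint_sub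
      (hU.apply_adjoint_apply_of_isKreinSqrt hWK hVWF hVWK (fun _ => hU1 _ _ _) _) (hφM v)]
  refine forall_im_inner_nonneg_iff_of_core (hVdom ▸ hcoreA) hWFcore (hVdom ▸ hDA) hVWF
    (M.sub_mem (M.smul_mem _ (hU.adjoint_apply_mem _)) (M.smul_mem _ (hφM v))) fun f => ?_
  exact im_inner_add_add_eq_of_isSqrtOf hAtdense hdual hWFsa hTF hVTF hWK.1 hTK hVTK f
    ((hVdom ▸ hDA) f.2) ((hVdom ▸ hDAt) f.2) (hV _ _ _ _) (hU1 _ _ _) (h𝓥 v.2) (hvK v) _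

/-- **main theorem.** Under the stated assumptions
(`v ∈ D(V_K^{1/2})` and `L v = V_F^{1/2} φ_v` with `φ_v ∈ D(V_F^{1/2}) ∩ cl(ran V_F^{1/2})`
for all `v ∈ 𝓥`), the extension `A_{𝓥,L}` is dissipative iff
`Im ⟪v, Ã* v + L v⟫ ≥ ¼ ‖U φ_v + 2i V_K^{1/2} v‖²` for all `v ∈ 𝓥`. -/
theorem statement7
    (A At V : H →ₗ.[ℂ] H) (D : Submodule ℂ H)
    (hAdense : Dense (A.domain : Set H)) (hAtdense : Dense (At.domain : Set H))
    (hAclosed : A.IsClosed) (hAtclosed : At.IsClosed)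
    (hdual : A ≤ At.adjoint)
    (hDA : D ≤ A.domain) (hDAt : D ≤ At.domain)
    (hcoreA : (A.domRestrict D).closure = A)
    (hcoreAt : (At.domRestrict D).closure = At)
    (hdiss : Dissipative A)
    (hVdom : V.domain = D)
    (hV : ∀ (x : H) (hxV : x ∈ V.domain) (hxA : x ∈ A.domain) (hxAt : x ∈ At.domain),
      V ⟨x, hxV⟩ = (2 * Complex.I)⁻¹ • (A ⟨x, hxA⟩ - At ⟨x, hxAt⟩))
    (𝓥 : Submodule ℂ H) (h𝓥 : 𝓥 ≤ At.adjoint.domain) (h𝓥A : 𝓥 ⊓ A.domain = ⊥)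
    (L : 𝓥 →ₗ[ℂ] H)
    (WF WK : H →ₗ.[ℂ] H)
    (hWF : IsFriedrichsSqrt V WF) (hWK : IsKreinSqrt V WK)
    (U : H →L[ℂ] H)
    (hU1 : ∀ (h : H) (hF : h ∈ WF.domain) (hK : h ∈ WK.domain),
      U (WF ⟨h, hF⟩) = WK ⟨h, hK⟩)
    (hU2 : ∀ x ∈ closure (Set.range fun g : WF.domain => WF g), ‖U x‖ = ‖x‖)
    (hU3 : ∀ x : H, (∀ g : WF.domain, ⟪WF g, x⟫ = 0) → U x = 0)
    (hvK : ∀ v : 𝓥, (v : H) ∈ WK.domain)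
    (φ : 𝓥 → H)
    (hφdom : ∀ v : 𝓥, φ v ∈ WF.domain)
    (hφran : ∀ v : 𝓥, φ v ∈ closure (Set.range fun g : WF.domain => WF g))
    (hφ : ∀ v : 𝓥, WF ⟨φ v, hφdom v⟩ = L v) :
    (∀ (f : A.domain) (v : 𝓥) (hfv : (f : H) + (v : H) ∈ At.adjoint.domain),
      0 ≤ (⟪(f : H) + (v : H), At.adjoint ⟨(f : H) + (v : H), hfv⟩ + L v⟫).im) ↔
      ∀ (v : 𝓥) (hv : (v : H) ∈ At.adjoint.domain),
        (1 / 4) * ‖U (φ v) + (2 * Complex.I) • WK ⟨(v : H), hvK v⟩‖ ^ 2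
          ≤ (⟪(v : H), At.adjoint ⟨(v : H), hv⟩ + L v⟫).im :=
  statement7_general A At V D hAtdense hdual hDA hDAt hcoreA hVdom hV 𝓥 h𝓥 L WF WK hWF hWK U hU1 hU2
    hU3 hvK φ hφdom hφran hφ
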